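/- Let f* be the least energy progress measure of an energy game arena Γ. Then for every vertex v ∈ V, v ∈ W₀ if and only if f*(v) ≠ ⊤. In other words, the least energy progress measure decides the winning region of player 0 in the energy game. -/

import Mathlib

/-!
If player 0 wins from `v` with a memoryless strategy `σ`, the least credit with which `σ` wins
from each vertex is an energy progress measure; it is finite at `v`, hence so is `f*(v)`.
Conversely, if `f*(v) = n` is finite, player 0 follows at each of her vertices an edge witnessing
the EPM condition; along any resulting play `f*` stays finite and below the current energy level,
so the credit `n` suffices.
-/

open scoped Classical
noncomputable section

/-- An energy game arena: vertices `V`, edge relation `E`, integer weights `w`,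
player-0 vertices `P0` (player 1 owns the rest), every vertex has a successor. -/
structure Arena (V : Type) where
  E : V → V → Prop
  w : V → V → ℤ
  P0 : V → Prop
  total : ∀ v, ∃ v', E v v'

variable {V : Type}

/-- `ρ` is a play (infinite path) starting at `v`. -/
def IsPlay (A : Arena V) (v : V) (ρ : ℕ → V) : Prop :=
  ρ 0 = v ∧ ∀ i, A.E (ρ i) (ρ (i + 1))

/-- A memoryless strategy for player 0. -/
def Strategy0 (A : Arena V) (σ : V → V) : Prop :=
  ∀ v, A.P0 v → A.E v (σ v)

/-- A memoryless strategy for player 1. -/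
def Strategy1 (A : Arena V) (σ : V → V) : Prop :=
  ∀ v, ¬ A.P0 v → A.E v (σ v)

/-- The play `ρ` is consistent with the player-0 strategy `σ`. -/
def Consistent0 (A : Arena V) (σ : V → V) (ρ : ℕ → V) : Prop :=
  ∀ j, A.P0 (ρ j) → ρ (j + 1) = σ (ρ j)

/-- The play `ρ` is consistent with the player-1 strategy `σ`. -/
def Consistent1 (A : Arena V) (σ : V → V) (ρ : ℕ → V) : Prop :=
  ∀ j, ¬ A.P0 (ρ j) → ρ (j + 1) = σ (ρ j)

/-- Energy level of the prefix `ρ 0 … ρ j` with initial credit `c`. -/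
def energy (A : Arena V) (c : ℕ) (ρ : ℕ → V) (j : ℕ) : ℤ :=
  (c : ℤ) + ∑ i ∈ Finset.range j, A.w (ρ i) (ρ (i + 1))

/-- The player-0 strategy `σ` is winning from `v` with initial credit `c`. -/
def WinningFrom (A : Arena V) (σ : V → V) (v : V) (c : ℕ) : Prop :=
  ∀ ρ : ℕ → V, IsPlay A v ρ → Consistent0 A σ ρ → ∀ j, 0 ≤ energy A c ρ j

/-- Winning region of player 0. -/
def W0 (A : Arena V) : Set V :=
  {v | ∃ σ : V → V, Strategy0 A σ ∧ ∃ c : ℕ, WinningFrom A σ v c}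

/-- `a ⊖ b = max (0, a - b)`, with `⊤ ⊖ b = ⊤`. -/
def osub (a : ℕ∞) (b : ℤ) : ℕ∞ :=
  a.map (fun n : ℕ => ((n : ℤ) - b).toNat)

/-- Energy progress measure. -/
def IsEPM (A : Arena V) (f : V → ℕ∞) : Prop :=
  (∀ v, A.P0 v → ∃ v', A.E v v' ∧ osub (f v') (A.w v v') ≤ f v) ∧
  (∀ v, ¬ A.P0 v → ∀ v', A.E v v' → osub (f v') (A.w v v') ≤ f v)

/-- New value at `v` computed by the lifting operator. -/
def liftVal (A : Arena V) (f : V → ℕ∞) (v : V) : ℕ∞ :=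
  if A.P0 v then sInf {x : ℕ∞ | ∃ v', A.E v v' ∧ x = osub (f v') (A.w v v')}
  else sSup {x : ℕ∞ | ∃ v', A.E v v' ∧ x = osub (f v') (A.w v v')}

/-- The lifting operator `δ(·, v)`. -/
def liftOp (A : Arena V) (f : V → ℕ∞) (v : V) : V → ℕ∞ :=
  fun u => if u = v then liftVal A f v else f u

/-- `f` violates the EPM local condition at `v`. -/
def Violates (A : Arena V) (f : V → ℕ∞) (v : V) : Prop :=
  (A.P0 v ∧ ∀ v', A.E v v' → f v < osub (f v') (A.w v v')) ∨
  (¬ A.P0 v ∧ ∃ v', A.E v v' ∧ f v < osub (f v') (A.w v v'))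

/-- `M_Γ = Σ_{v∈V} max({0} ∪ {−w(v,v') : (v,v') ∈ E})`. -/
def MGamma (A : Arena V) [Fintype V] : ℕ :=
  ∑ v : V, (Finset.univ.filter (fun v' => A.E v v')).sup (fun v' => (-(A.w v v')).toNat)

lemma osub_coe (n : ℕ) (b : ℤ) : osub (n : ℕ∞) b = (((n : ℤ) - b).toNat : ℕ∞) := rfl

lemma osub_top (b : ℤ) : osub ⊤ b = ⊤ := rfl

lemma osub_le_osub {a b : ℕ∞} (h : a ≤ b) (w : ℤ) : osub a w ≤ osub b w := by
  cases b with
  | top => simp [osub_top]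
  | coe n =>
    lift a to ℕ using ne_top_of_le_ne_top (ENat.natCast_ne_top n) h
    rw [Nat.cast_le] at h
    rw [osub_coe, osub_coe, Nat.cast_le]
    exact Int.toNat_le_toNat (by omega)

lemma exists_eq_coe_of_osub_le_coe {a : ℕ∞} {b : ℤ} {c : ℕ} (h : osub a b ≤ c) :
    ∃ n : ℕ, a = n ∧ (n : ℤ) ≤ c + b := by
  cases a with
  | top => simp [osub_top] at h
  | coe n =>
    rw [osub_coe, Nat.cast_le, Int.toNat_le] at h
    exact ⟨n, rfl, by omega⟩

variable {A : Arena V}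

lemma energy_succ (c : ℕ) (ρ : ℕ → V) (j : ℕ) :
    energy A c ρ (j + 1) = energy A c ρ j + A.w (ρ j) (ρ (j + 1)) := by
  rw [energy, energy, Finset.sum_range_succ, add_assoc]

lemma Strategy0.exists_play {σ : V → V} (hσ : Strategy0 A σ) (u : V) :
    ∃ ρ, IsPlay A u ρ ∧ Consistent0 A σ ρ := by
  let next : V → V := fun p => if A.P0 p then σ p else (A.total p).choose
  refine ⟨fun k => next^[k] u, ⟨rfl, fun i => ?_⟩, fun j hj => ?_⟩
  · show A.E (next^[i] u) (next^[i + 1] u)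
    rw [Function.iterate_succ_apply']
    by_cases hP : A.P0 (next^[i] u)
    · simpa [next, hP] using hσ _ hP
    · simpa [next, hP] using (A.total _).choose_spec
  · simp only [Function.iterate_succ_apply', next, if_pos hj]

def prepend (u : V) (ρ : ℕ → V) : ℕ → V
  | 0 => u
  | k + 1 => ρ k

lemma IsPlay.prepend {u u' : V} {ρ : ℕ → V} (hρ : IsPlay A u' ρ) (hE : A.E u u') :
    IsPlay A u (prepend u ρ) := by
  refine ⟨rfl, fun i => ?_⟩
  cases i with
  | zero => simpa [_root_.prepend, hρ.1] using hE
  | succ i => exact hρ.2 i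

lemma Consistent0.prepend {σ : V → V} {u : V} {ρ : ℕ → V} (hρ : Consistent0 A σ ρ)
    (hu : A.P0 u → ρ 0 = σ u) : Consistent0 A σ (prepend u ρ) := by
  intro j hj
  cases j with
  | zero => exact hu hj
  | succ j => exact hρ j hj

lemma energy_prepend_succ (c : ℕ) (u : V) (ρ : ℕ → V) (j : ℕ) :
    energy A c (prepend u ρ) (j + 1) =
      (c : ℤ) + A.w u (ρ 0) + ∑ i ∈ Finset.range j, A.w (ρ i) (ρ (i + 1)) := by
  rw [energy, Finset.sum_range_succ', add_comm (∑ i ∈ _, _), add_assoc]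
  rfl

lemma WinningFrom.step {σ : V → V} (hσ : Strategy0 A σ) {u u' : V} {c : ℕ}
    (hwin : WinningFrom A σ u c) (hE : A.E u u') (hcons : A.P0 u → u' = σ u) :
    0 ≤ (c : ℤ) + A.w u u' ∧ WinningFrom A σ u' ((c : ℤ) + A.w u u').toNat := by
  have extend : ∀ ρ, IsPlay A u' ρ → Consistent0 A σ ρ → ∀ j,
      0 ≤ (c : ℤ) + A.w u u' + ∑ i ∈ Finset.range j, A.w (ρ i) (ρ (i + 1)) := by
    intro ρ hρ hcρ j
    have h := hwin _ (hρ.prepend hE) (hcρ.prepend (by rw [hρ.1]; exact hcons)) (j + 1)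
    rwa [energy_prepend_succ, hρ.1] at h
  have hnonneg : 0 ≤ (c : ℤ) + A.w u u' := by
    obtain ⟨ρ, hρ, hcρ⟩ := hσ.exists_play u'
    simpa using extend ρ hρ hcρ 0
  refine ⟨hnonneg, fun ρ hρ hcρ j => ?_⟩
  rw [energy, Int.toNat_of_nonneg hnonneg]
  exact extend ρ hρ hcρ j

/-- `⊤` when no credit lets `σ` win from `u` (infimum of the empty set). -/
def minCredit (A : Arena V) (σ : V → V) (u : V) : ℕ∞ :=
  ⨅ (c : ℕ) (_ : WinningFrom A σ u c), (c : ℕ∞)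

lemma minCredit_le {σ : V → V} {u : V} {c : ℕ} (h : WinningFrom A σ u c) :
    minCredit A σ u ≤ c :=
  iInf₂_le c h

lemma isEPM_minCredit {σ : V → V} (hσ : Strategy0 A σ) : IsEPM A (minCredit A σ) := by
  have key : ∀ u u', A.E u u' → (A.P0 u → u' = σ u) →
      osub (minCredit A σ u') (A.w u u') ≤ minCredit A σ u := by
    intro u u' hE hcons
    refine le_iInf₂ fun c hc => ?_
    obtain ⟨hnonneg, hwin'⟩ := hc.step hσ hE hcons
    calc osub (minCredit A σ u') (A.w u u')
        ≤ osub (((c : ℤ) + A.w u u').toNat : ℕ) (A.w u u') := osub_le_osub (minCredit_le hwin') _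
      _ = c := by
        rw [osub_coe, Int.toNat_of_nonneg hnonneg, add_sub_cancel_right]
        rfl
  exact ⟨fun u hu => ⟨σ u, hσ u hu, key u _ (hσ u hu) fun _ => rfl⟩,
    fun u hu u' hE => key u u' hE fun h => absurd h hu⟩

lemma IsEPM.exists_strategy {f : V → ℕ∞} (hf : IsEPM A f) :
    ∃ σ, Strategy0 A σ ∧ ∀ u, A.P0 u → osub (f (σ u)) (A.w u (σ u)) ≤ f u := by
  choose τ hτE hτ using hf.1
  refine ⟨fun u => if hu : A.P0 u then τ u hu else u, fun u hu => ?_, fun u hu => ?_⟩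
  · simpa [hu] using hτE u hu
  · simpa [hu] using hτ u hu

lemma exists_coe_le_energy {f : V → ℕ∞} {ρ : ℕ → V} {n : ℕ} (h0 : f (ρ 0) = n)
    (hstep : ∀ j, osub (f (ρ (j + 1))) (A.w (ρ j) (ρ (j + 1))) ≤ f (ρ j)) (j : ℕ) :
    ∃ m : ℕ, f (ρ j) = m ∧ (m : ℤ) ≤ energy A n ρ j := by
  induction j with
  | zero => exact ⟨n, h0, by simp [energy]⟩
  | succ j ih =>
    obtain ⟨m, hm, hle⟩ := ih
    have hs := hstep j
    rw [hm] at hs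
    obtain ⟨m', hm', hle'⟩ := exists_eq_coe_of_osub_le_coe hs
    exact ⟨m', hm', by rw [energy_succ]; omega⟩

lemma mem_W0_of_isEPM {f : V → ℕ∞} (hf : IsEPM A f) {v : V} (hv : f v ≠ ⊤) : v ∈ W0 A := by
  obtain ⟨σ, hσ, hσf⟩ := hf.exists_strategy
  lift f v to ℕ using hv with n hn
  refine ⟨σ, hσ, n, fun ρ hρ hcρ j => ?_⟩
  have hstep : ∀ i, osub (f (ρ (i + 1))) (A.w (ρ i) (ρ (i + 1))) ≤ f (ρ i) := by
    intro i
    by_cases hP : A.P0 (ρ i)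
    · rw [hcρ i hP]
      exact hσf _ hP
    · exact hf.2 _ hP _ (hρ.2 i)
  obtain ⟨m, -, hm⟩ := exists_coe_le_energy (by rw [hρ.1, hn]) hstep j
  omega

theorem stmt9_general {V : Type} (A : Arena V)
    (fstar : V → ℕ∞) (hEPM : IsEPM A fstar)
    (hleast : ∀ f : V → ℕ∞, IsEPM A f → ∀ v, fstar v ≤ f v) :
    ∀ v : V, v ∈ W0 A ↔ fstar v ≠ ⊤ := by
  intro v
  constructor
  · rintro ⟨σ, hσ, c, hwin⟩
    exact ne_top_of_le_ne_top (ENat.natCast_ne_top c)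
      ((hleast _ (isEPM_minCredit hσ) v).trans (minCredit_le hwin))
  · exact mem_W0_of_isEPM hEPM

/-- The least energy progress measure decides player 0's winning region:
`v ∈ W₀` iff `f*(v) ≠ ⊤`. -/
theorem stmt9 {V : Type} [Fintype V] [Nonempty V] (A : Arena V)
    (fstar : V → ℕ∞) (hEPM : IsEPM A fstar)
    (hleast : ∀ f : V → ℕ∞, IsEPM A f → ∀ v, fstar v ≤ f v) :
    ∀ v : V, v ∈ W0 A ↔ fstar v ≠ ⊤ :=
  stmt9_general A fstar hEPM hleast
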